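/- arXiv:1612.09236 — 3 statements merged into one kernel-verified Lean document; each statement's English description precedes it below -/
import Mathlib

section
/- The Gagliardo–Nirenberg inequality in one dimension: there is a constant C such that for all f ∈ H¹(ℝ), ‖f‖_{L⁴(ℝ)}⁴ ≤ C ‖f‖_{L²(ℝ)}³ ‖f'‖_{L²(ℝ)}. -/
/-!
Since `‖f‖²` is integrable with integrable derivative `2⟪f, f'⟫`, it vanishes at `-∞`, so the
fundamental theorem of calculus gives `‖f x‖² ≤ 2 ∫ ‖f‖ ‖f'‖ ≤ 2 ‖f‖₂ ‖f'‖₂` by Cauchy–Schwarz.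
Then `‖f‖₄⁴ = ∫ ‖f‖² ‖f‖² ≤ (sup ‖f‖²) ‖f‖₂²`.
-/

open MeasureTheory ENNReal Set Filter Topology

theorem integral_Iic_deriv_eq_of_integrable {E : Type*} [NormedAddCommGroup E] [NormedSpace ℝ E]
    [CompleteSpace E] {g : ℝ → E} (hg : Differentiable ℝ g) (hg_int : Integrable g)
    (hg'_int : Integrable (deriv g)) (x : ℝ) :
    ∫ t in Iic x, deriv g t = g x := by
  have hderiv : ∀ t ∈ Iic x, HasDerivAt g (deriv g t) t := fun t _ => (hg t).hasDerivAt
  have hlim : Tendsto g atBot (𝓝 0) :=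
    tendsto_zero_of_hasDerivAt_of_integrableOn_Iic hderiv hg'_int.integrableOn
      hg_int.integrableOn
  rw [integral_Iic_of_hasDerivAt_of_tendsto' hderiv hg'_int.integrableOn hlim, sub_zero]

theorem sq_norm_le_two_mul_integral_norm_mul_norm_deriv {E : Type*} [NormedAddCommGroup E]
    [InnerProductSpace ℝ E] {f : ℝ → E} (hf : Differentiable ℝ f)
    (hf_sq : Integrable fun t => ‖f t‖ ^ 2)
    (hff' : Integrable fun t => ‖f t‖ * ‖deriv f t‖) (x : ℝ) :
    ‖f x‖ ^ 2 ≤ 2 * ∫ t, ‖f t‖ * ‖deriv f t‖ := by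
  set g : ℝ → ℝ := fun t => ‖f t‖ ^ 2
  have hg' : ∀ t, deriv g t = 2 * inner ℝ (f t) (deriv f t) :=
    fun t => (hf t).hasDerivAt.norm_sq.deriv
  have hg'_le : ∀ t, ‖deriv g t‖ ≤ 2 * (‖f t‖ * ‖deriv f t‖) := by
    intro t
    rw [hg', norm_mul, Real.norm_two]
    gcongr
    exact norm_inner_le_norm _ _
  have hg'_int : Integrable (deriv g) :=
    (hff'.const_mul 2).mono' (measurable_deriv g).aestronglyMeasurable (.of_forall hg'_le)
  have hg : Differentiable ℝ g := fun t => (hf t).hasDerivAt.norm_sq.differentiableAt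
  calc ‖f x‖ ^ 2 = ∫ t in Iic x, deriv g t :=
        (integral_Iic_deriv_eq_of_integrable hg hf_sq hg'_int x).symm
    _ ≤ ∫ t in Iic x, 2 * (‖f t‖ * ‖deriv f t‖) :=
        setIntegral_mono hg'_int.integrableOn (hff'.const_mul 2).integrableOn
          fun t => (le_abs_self _).trans (hg'_le t)
    _ ≤ ∫ t, 2 * (‖f t‖ * ‖deriv f t‖) :=
        setIntegral_le_integral (hff'.const_mul 2) (.of_forall fun t => by positivity)
    _ = 2 * ∫ t, ‖f t‖ * ‖deriv f t‖ := integral_const_mul _ _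

theorem enorm_sq_le_two_mul_eLpNorm_mul_eLpNorm_deriv {E : Type*} [NormedAddCommGroup E]
    [InnerProductSpace ℝ E] {f : ℝ → E} (hf : Differentiable ℝ f) (hf2 : MemLp f 2)
    (hf'2 : MemLp (deriv f) 2) (x : ℝ) :
    ‖f x‖ₑ ^ 2 ≤ 2 * eLpNorm f 2 volume * eLpNorm (deriv f) 2 volume := by
  set h : ℝ → E := fun t => ‖f t‖ • deriv f t
  have h_norm : ∀ t, ‖h t‖ = ‖f t‖ * ‖deriv f t‖ := fun t => by
    simp only [h, norm_smul, norm_norm]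
  have h_int : Integrable h := memLp_one_iff_integrable.1 (hf'2.smul hf2.norm)
  have hreal := sq_norm_le_two_mul_integral_norm_mul_norm_deriv hf
    (hf2.integrable_norm_pow two_ne_zero) (by simpa only [h_norm] using h_int.norm) x
  have h_holder : eLpNorm h 1 volume ≤ eLpNorm f 2 volume * eLpNorm (deriv f) 2 volume := by
    have := eLpNorm_smul_le_mul_eLpNorm hf'2.1 hf2.norm.1 (p := 2) (q := 2) (r := 1)
    rwa [eLpNorm_norm] at this
  calc ‖f x‖ₑ ^ 2 = ENNReal.ofReal (‖f x‖ ^ 2) := by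
        rw [← ofReal_norm, ENNReal.ofReal_pow (norm_nonneg _)]
    _ ≤ ENNReal.ofReal (2 * ∫ t, ‖h t‖) := by
        simp only [h_norm]
        exact ENNReal.ofReal_le_ofReal hreal
    _ = 2 * eLpNorm h 1 volume := by
        rw [ENNReal.ofReal_mul zero_le_two, ofReal_integral_norm_eq_lintegral_enorm h_int,
          eLpNorm_one_eq_lintegral_enorm, ENNReal.ofReal_ofNat]
    _ ≤ 2 * eLpNorm f 2 volume * eLpNorm (deriv f) 2 volume := by
        rw [mul_assoc]
        gcongr

theorem eLpNorm_four_pow_le_mul_eLpNorm_two_sq {α ε : Type*} [MeasurableSpace α] [ENorm ε]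
    {μ : Measure α} {f : α → ε} {M : ℝ≥0∞} (hM : M ≠ ∞) (hfM : ∀ᵐ x ∂μ, ‖f x‖ₑ ^ 2 ≤ M) :
    eLpNorm f 4 μ ^ 4 ≤ M * eLpNorm f 2 μ ^ 2 := by
  have h4 := eLpNorm_nnreal_pow_eq_lintegral (μ := μ) (f := f) (p := 4) (by norm_num)
  have h2 := eLpNorm_nnreal_pow_eq_lintegral (μ := μ) (f := f) (p := 2) (by norm_num)
  simp only [ENNReal.coe_ofNat, NNReal.coe_ofNat, ENNReal.rpow_ofNat] at h4 h2
  rw [h4, h2, ← lintegral_const_mul' _ _ hM]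
  refine lintegral_mono_ae (hfM.mono fun x hx => ?_)
  calc ‖f x‖ₑ ^ 4 = ‖f x‖ₑ ^ 2 * ‖f x‖ₑ ^ 2 := by rw [← pow_add]
    _ ≤ M * ‖f x‖ₑ ^ 2 := by gcongr

/-- the Gagliardo–Nirenberg inequality in one dimension: there is a
constant C such that for all f ∈ H¹(ℝ) (f ∈ L² differentiable with derivative in L²),
‖f‖_{L⁴}⁴ ≤ C ‖f‖_{L²}³ ‖f'‖_{L²}. -/
theorem stmt_3 :
    ∃ C : ℝ, 0 < C ∧ ∀ f : ℝ → ℂ, Differentiable ℝ f →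
      MemLp f 2 (volume : Measure ℝ) → MemLp (deriv f) 2 (volume : Measure ℝ) →
      (eLpNorm f 4 volume) ^ (4 : ℕ) ≤
        ENNReal.ofReal C * (eLpNorm f 2 volume) ^ (3 : ℕ) * eLpNorm (deriv f) 2 volume := by
  refine ⟨2, two_pos, fun f hf hf2 hf'2 => ?_⟩
  have hM : 2 * eLpNorm f 2 volume * eLpNorm (deriv f) 2 volume ≠ ∞ :=
    mul_ne_top (mul_ne_top ofNat_ne_top hf2.eLpNorm_ne_top) hf'2.eLpNorm_ne_top
  calc eLpNorm f 4 volume ^ 4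
      ≤ 2 * eLpNorm f 2 volume * eLpNorm (deriv f) 2 volume * eLpNorm f 2 volume ^ 2 :=
        eLpNorm_four_pow_le_mul_eLpNorm_two_sq hM
          (.of_forall (enorm_sq_le_two_mul_eLpNorm_mul_eLpNorm_deriv hf hf2 hf'2))
    _ = ENNReal.ofReal 2 * eLpNorm f 2 volume ^ 3 * eLpNorm (deriv f) 2 volume := by
        rw [ENNReal.ofReal_ofNat]
        ring
end

section
/- Hille's theorem: let (A, 𝒜, μ) be a σ-finite measure space, E, F Banach spaces, f: A → E Bochner integrable, and T a closed linear operator with domain D(T) ⊆ E and values in F. If f takes values in D(T) μ-a.e. and the function T∘f: A → F is Bochner integrable, then ∫_A f dμ ∈ D(T) and T(∫_A f dμ) = ∫_A (T∘f) dμ. -/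
open MeasureTheory

/-- Hille's theorem.  (A, 𝒜, μ) a σ-finite measure space, E, F Banach
spaces, f : A → E Bochner integrable, and T a closed (unbounded) linear operator with
domain D(T) ⊆ E and values in F (closedness = its graph is closed in E × F).  If f
takes values in D(T) μ-a.e. and Tf (represented by the function g, which agrees a.e.
with T applied to f) is Bochner integrable, then ∫ f dμ ∈ D(T) and
T(∫ f dμ) = ∫ Tf dμ. -/
theorem stmt_10 {A E F : Type*} [MeasurableSpace A]
    [NormedAddCommGroup E] [NormedSpace ℝ E] [CompleteSpace E]
    [NormedAddCommGroup F] [NormedSpace ℝ F] [CompleteSpace F]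
    (μ : Measure A) [SigmaFinite μ]
    (T : E →ₗ.[ℝ] F) (hT : IsClosed (T.graph : Set (E × F)))
    (f : A → E) (hf : Integrable f μ)
    (g : A → F) (hg : Integrable g μ)
    (hfg : ∀ᵐ a ∂μ, ∃ h : f a ∈ T.domain, g a = T ⟨f a, h⟩) :
    ∃ h : (∫ a, f a ∂μ) ∈ T.domain, T ⟨∫ a, f a ∂μ, h⟩ = ∫ a, g a ∂μ := by
  set S : Submodule ℝ (E × F) := T.graph with hS
  haveI : IsClosed (S : Set (E × F)) := hT
  let π : (E × F) →L[ℝ] (E × F) ⧸ S :=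
    { S.mkQ with cont := continuous_quot_mk }
  have hpair : Integrable (fun a => (f a, g a)) μ := hf.prodMk hg
  have hae : (fun a => π (f a, g a)) =ᵐ[μ] fun _ => (0 : (E × F) ⧸ S) := by
    filter_upwards [hfg] with a ⟨ha, hga⟩
    show S.mkQ (f a, g a) = 0
    rw [Submodule.mkQ_apply, Submodule.Quotient.mk_eq_zero, hS, T.mem_graph_iff]
    exact ⟨⟨f a, ha⟩, rfl, hga.symm⟩
  have h0 : π (∫ a, (f a, g a) ∂μ) = 0 := by
    rw [← ContinuousLinearMap.integral_comp_comm π hpair, integral_congr_ae hae,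
      integral_zero]
  have hmem : (∫ a, (f a, g a) ∂μ) ∈ S := by
    rwa [show π (∫ a, (f a, g a) ∂μ) = S.mkQ (∫ a, (f a, g a) ∂μ) from rfl,
      Submodule.mkQ_apply, Submodule.Quotient.mk_eq_zero] at h0
  rw [integral_pair hf hg, hS, T.mem_graph_iff] at hmem
  obtain ⟨x, hx1, hx2⟩ := hmem
  have hx1' : (x : E) = ∫ a, f a ∂μ := hx1
  refine ⟨hx1' ▸ x.2, ?_⟩
  have : T ⟨∫ a, f a ∂μ, hx1' ▸ x.2⟩ = T x := by
    congr 1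
    exact Subtype.ext hx1'.symm
  rw [this, hx2]
end

section
/- Continuity of the factorization map: for s ≥ 0 and k ∈ ℕ, the map f_k sending φ ∈ H^s(ℝ) to the k-fold tensor product kernel ∏_{i=1}^k φ(x_i) conj(φ)(x_i') is continuous from H^s(ℝ) into the space of trace-class-type kernels with norm ‖γ‖ = Tr |S^{(k,s)} γ| where S^{(k,s)} = ∏_j (1-Δ_{x_j})^{s/2}(1-Δ_{x_j'})^{s/2}. In particular, ‖f_k(φ) - f_k(ψ)‖ ≤ C k ‖φ - ψ‖_{H^s} (‖φ‖_{H^s} + ‖ψ‖_{H^s})^{2k-1}. -/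
/-!
Since |U⟩⟨U| - |V⟩⟨V| = |U - V⟩⟨U| + |V⟩⟨U - V| and a rank-one operator |x⟩⟨y| has trace norm
at most ‖x‖‖y‖ (Cauchy–Schwarz and Bessel), the trace norm is at most ‖U - V‖(‖U‖ + ‖V‖).
For product functions Tonelli gives ‖U‖ = ‖u‖^k, and telescoping ∏ u(xᵢ) - ∏ v(xᵢ) into k
products, each having a single factor u - v, gives ‖U - V‖ ≤ k‖u - v‖(‖u‖ + ‖v‖)^(k-1).
-/

open MeasureTheory ENNReal NNReal

noncomputable section

/-- The rank-one operator |u⟩⟨v| : x ↦ ⟨v, x⟩ u on a complex inner product space. -/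
def rankOne {H : Type*} [NormedAddCommGroup H] [InnerProductSpace ℂ H]
    (u v : H) : H →L[ℂ] H :=
  (innerSL ℂ v).smulRight u

/-- The trace norm Tr|T| of an operator on a Hilbert space, via the characterization
‖T‖₁ = sup { Σₙ |⟨eₙ, T fₙ⟩| : (eₙ), (fₙ) orthonormal sequences }. -/
def traceNorm {H : Type*} [NormedAddCommGroup H] [InnerProductSpace ℂ H]
    (T : H →L[ℂ] H) : ℝ≥0∞ :=
  ⨆ (e : ℕ → H) (f : ℕ → H) (_ : Orthonormal ℂ e) (_ : Orthonormal ℂ f),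
    ∑' j : ℕ, (‖(inner ℂ (e j) (T (f j)) : ℂ)‖₊ : ℝ≥0∞)

section TraceNorm

variable {H : Type*} [NormedAddCommGroup H] [InnerProductSpace ℂ H]

lemma rankOne_apply (u v x : H) : rankOne u v x = inner ℂ v x • u := rfl

lemma rankOne_sub_rankOne (u v : H) :
    rankOne u u - rankOne v v = rankOne (u - v) u + rankOne v (u - v) := by
  ext x
  simp only [sub_apply, add_apply, rankOne_apply, inner_sub_left, smul_sub, sub_smul]
  abel

lemma tsum_nnnorm_inner_le_traceNorm (T : H →L[ℂ] H) {e f : ℕ → H} (he : Orthonormal ℂ e)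
    (hf : Orthonormal ℂ f) : ∑' j, (‖(inner ℂ (e j) (T (f j)) : ℂ)‖₊ : ℝ≥0∞) ≤ traceNorm T :=
  le_iSup_of_le e <| le_iSup_of_le f <| le_iSup_of_le he <| le_iSup_of_le hf le_rfl

lemma traceNorm_add_le (S T : H →L[ℂ] H) : traceNorm (S + T) ≤ traceNorm S + traceNorm T := by
  refine iSup_le fun e => iSup_le fun f => iSup_le fun he => iSup_le fun hf => ?_
  calc ∑' j, (‖(inner ℂ (e j) ((S + T) (f j)) : ℂ)‖₊ : ℝ≥0∞)
      ≤ ∑' j, ((‖(inner ℂ (e j) (S (f j)) : ℂ)‖₊ : ℝ≥0∞) + ‖(inner ℂ (e j) (T (f j)) : ℂ)‖₊) := by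
        gcongr with j
        rw [add_apply, inner_add_right]
        exact_mod_cast nnnorm_add_le _ _
    _ = ∑' j, (‖(inner ℂ (e j) (S (f j)) : ℂ)‖₊ : ℝ≥0∞)
          + ∑' j, (‖(inner ℂ (e j) (T (f j)) : ℂ)‖₊ : ℝ≥0∞) := ENNReal.tsum_add
    _ ≤ traceNorm S + traceNorm T :=
        add_le_add (tsum_nnnorm_inner_le_traceNorm S he hf) (tsum_nnnorm_inner_le_traceNorm T he hf)

lemma traceNorm_rankOne_le (x y : H) : traceNorm (rankOne x y) ≤ ‖x‖ₑ * ‖y‖ₑ := by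
  refine iSup_le fun e => iSup_le fun f => iSup_le fun he => iSup_le fun hf =>
    ENNReal.tsum_le_of_sum_range_le fun n => ?_
  have bessel {v : ℕ → H} (hv : Orthonormal ℂ v) (z : H) :
      NNReal.sqrt (∑ j ∈ Finset.range n, ‖(inner ℂ (v j) z : ℂ)‖₊ ^ 2) ≤ ‖z‖₊ := by
    rw [NNReal.sqrt_le_iff_le_sq, ← NNReal.coe_le_coe]
    push_cast
    exact hv.sum_inner_products_le z
  simp only [rankOne_apply, inner_smul_right, nnnorm_mul, enorm_eq_nnnorm]
  rw [← ENNReal.ofNNReal_finsetSum, ← ENNReal.coe_mul, ENNReal.coe_le_coe]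
  calc ∑ j ∈ Finset.range n, ‖(inner ℂ y (f j) : ℂ)‖₊ * ‖(inner ℂ (e j) x : ℂ)‖₊
      = ∑ j ∈ Finset.range n, ‖(inner ℂ (e j) x : ℂ)‖₊ * ‖(inner ℂ (f j) y : ℂ)‖₊ := by
        refine Finset.sum_congr rfl fun j _ => ?_
        rw [mul_comm, ← inner_conj_symm y (f j), RCLike.nnnorm_conj]
    _ ≤ _ := NNReal.sum_mul_le_sqrt_mul_sqrt _ _ _
    _ ≤ ‖x‖₊ * ‖y‖₊ := mul_le_mul' (bessel he x) (bessel hf y)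

lemma traceNorm_rankOne_sub_rankOne_le (u v : H) :
    traceNorm (rankOne u u - rankOne v v) ≤ ‖u - v‖ₑ * (‖u‖ₑ + ‖v‖ₑ) := by
  rw [rankOne_sub_rankOne, mul_add, mul_comm _ ‖v‖ₑ]
  exact (traceNorm_add_le _ _).trans (add_le_add (traceNorm_rankOne_le _ _)
    (traceNorm_rankOne_le _ _))

end TraceNorm

lemma Finset.prod_sub_prod_eq_sum_prod_ite {ι R : Type*} [LinearOrder ι] [CommRing R]
    (s : Finset ι) (a b : ι → R) :
    ∏ i ∈ s, a i - ∏ i ∈ s, b i =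
      ∑ j ∈ s, ∏ i ∈ s, (if i < j then b i else if i = j then a i - b i else a i) := by
  have h := Finset.prod_sub_ordered s a (a - b)
  simp only [Pi.sub_apply, _root_.sub_sub_cancel] at h
  rw [h, _root_.sub_sub_cancel]
  refine Finset.sum_congr rfl fun j hj => ?_
  rw [Finset.prod_ite, Finset.prod_ite, Finset.filter_filter, Finset.filter_filter]
  have h_eq : {i ∈ s | ¬i < j ∧ i = j} = {j} := by ext; grind
  have h_gt : {i ∈ s | ¬i < j ∧ ¬i = j} = {i ∈ s | j < i} := by ext; grind
  rw [h_eq, h_gt, Finset.prod_singleton]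
  ring

lemma lintegral_fin_nat_prod_eq_prod {n : ℕ} {E : Fin n → Type*}
    {mE : ∀ i, MeasurableSpace (E i)} {μ : (i : Fin n) → Measure (E i)} [∀ i, SigmaFinite (μ i)]
    {f : (i : Fin n) → E i → ℝ≥0∞} (hf : ∀ i, AEMeasurable (f i) (μ i)) :
    ∫⁻ x, ∏ i, f i (x i) ∂(Measure.pi μ) = ∏ i, ∫⁻ x, f i x ∂(μ i) := by
  induction n with
  | zero => simp
  | succ n ih =>
      calc
        _ = ∫⁻ x : E 0 × ((i : Fin n) → E (Fin.succ i)),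
            f 0 x.1 * ∏ i : Fin n, f (Fin.succ i) (x.2 i)
            ∂((μ 0).prod (Measure.pi (fun i ↦ μ i.succ))) := by
          rw [← ((measurePreserving_piFinSuccAbove μ 0).symm).lintegral_comp_emb
            (MeasurableEquiv.measurableEmbedding _)]
          simp_rw [MeasurableEquiv.piFinSuccAbove_symm_apply, Fin.insertNthEquiv,
            Fin.prod_univ_succ, Fin.insertNth_zero, Equiv.coe_fn_mk, Fin.cons_succ,
            Fin.zero_succAbove, Fin.cons_zero]
          rfl
        _ = (∫⁻ x, f 0 x ∂μ 0) * ∏ i : Fin n, ∫⁻ x, f i.succ x ∂(μ i.succ) := by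
          rw [← ih fun i => hf i.succ, ← lintegral_prod_mul (hf 0)]
          exact Finset.aemeasurable_fun_prod _ fun i _ =>
            (hf i.succ).comp_quasiMeasurePreserving (Measure.quasiMeasurePreserving_eval _ i)
        _ = ∏ i, ∫⁻ x, f i x ∂(μ i) := by rw [Fin.prod_univ_succ]

lemma eLpNorm_fin_nat_prod_eq_prod {𝕜 : Type*} [NormedField 𝕜] {n : ℕ} {E : Fin n → Type*}
    {mE : ∀ i, MeasurableSpace (E i)} {μ : (i : Fin n) → Measure (E i)} [∀ i, SigmaFinite (μ i)]
    {p : ℝ≥0∞} (hp0 : p ≠ 0) (hp : p ≠ ∞)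
    {g : (i : Fin n) → E i → 𝕜} (hg : ∀ i, AEStronglyMeasurable (g i) (μ i)) :
    eLpNorm (fun x => ∏ i, g i (x i)) p (Measure.pi μ) = ∏ i, eLpNorm (g i) p (μ i) := by
  have enorm_prod (x : (i : Fin n) → E i) : ‖∏ i, g i (x i)‖ₑ = ∏ i, ‖g i (x i)‖ₑ := by
    simp only [enorm_eq_nnnorm, nnnorm_prod, ENNReal.ofNNReal_finsetProd]
  simp only [eLpNorm_eq_lintegral_rpow_enorm_toReal hp0 hp, enorm_prod]
  rw [ENNReal.prod_rpow_of_nonneg (by positivity),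
    ← lintegral_fin_nat_prod_eq_prod fun i => (hg i).enorm.pow_const _]
  simp_rw [ENNReal.prod_rpow_of_nonneg ENNReal.toReal_nonneg]

lemma eLpNorm_fin_prod_sub_fin_prod_le {𝕜 : Type*} [NormedField 𝕜] {n : ℕ} {E : Type*}
    [MeasurableSpace E] {μ : Measure E} [SigmaFinite μ] {p : ℝ≥0∞} (hp1 : 1 ≤ p) (hp : p ≠ ∞)
    {f g : E → 𝕜} (hf : AEStronglyMeasurable f μ) (hg : AEStronglyMeasurable g μ) :
    eLpNorm (fun x : Fin n → E => ∏ i, f (x i) - ∏ i, g (x i)) p (Measure.pi fun _ => μ)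
      ≤ n * eLpNorm (f - g) p μ * (eLpNorm f p μ + eLpNorm g p μ) ^ (n - 1) := by
  set S := eLpNorm f p μ + eLpNorm g p μ
  let w (j i : Fin n) : E → 𝕜 := if i < j then g else if i = j then f - g else f
  have hw (j i : Fin n) : AEStronglyMeasurable (w j i) μ := by
    unfold w; split_ifs
    exacts [hg, hf.sub hg, hf]
  have hw_le (j i : Fin n) : eLpNorm (w j i) p μ ≤ S := by
    unfold w; split_ifs
    · exact le_add_self
    · exact eLpNorm_sub_le hf hg hp1
    · exact le_self_add
  have hterm (j : Fin n) :
      eLpNorm (fun x : Fin n → E => ∏ i, w j i (x i)) p (Measure.pi fun _ => μ)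
        ≤ eLpNorm (f - g) p μ * S ^ (n - 1) := by
    rw [eLpNorm_fin_nat_prod_eq_prod (by positivity) hp (hw j),
      ← Finset.mul_prod_erase _ _ (Finset.mem_univ j)]
    have hjj : w j j = f - g := by simp [w]
    calc _ ≤ eLpNorm (f - g) p μ * ∏ _i ∈ Finset.univ.erase j, S := by
          rw [hjj]; gcongr with i; exact hw_le j i
      _ = eLpNorm (f - g) p μ * S ^ (n - 1) := by
          rw [Finset.prod_const, Finset.card_erase_of_mem (Finset.mem_univ j), Finset.card_univ,
            Fintype.card_fin]
  have htele : (fun x : Fin n → E => ∏ i, f (x i) - ∏ i, g (x i))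
      = ∑ j, fun x : Fin n → E => ∏ i, w j i (x i) := by
    ext x
    rw [Finset.prod_sub_prod_eq_sum_prod_ite, Finset.sum_apply]
    refine Finset.sum_congr rfl fun j _ => Finset.prod_congr rfl fun i _ => ?_
    unfold w; split_ifs <;> rfl
  calc _ = eLpNorm (∑ j, fun x : Fin n → E => ∏ i, w j i (x i)) p (Measure.pi fun _ => μ) := by
        rw [htele]
    _ ≤ ∑ j, eLpNorm (fun x : Fin n → E => ∏ i, w j i (x i)) p (Measure.pi fun _ => μ) :=
        eLpNorm_sum_le (fun j _ => Finset.aestronglyMeasurable_fun_prod _ fun i _ =>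
          (hw j i).comp_quasiMeasurePreserving (Measure.quasiMeasurePreserving_eval _ i)) hp1
    _ ≤ ∑ _j : Fin n, eLpNorm (f - g) p μ * S ^ (n - 1) := Finset.sum_le_sum fun j _ => hterm j
    _ = n * eLpNorm (f - g) p μ * S ^ (n - 1) := by
        rw [Finset.sum_const, Finset.card_univ, Fintype.card_fin, nsmul_eq_mul, mul_assoc]

namespace MeasureTheory.Lp

variable {𝕜 : Type*} [NormedField 𝕜] {n : ℕ} {E : Type*} [MeasurableSpace E] {μ : Measure E}
  [SigmaFinite μ] {p : ℝ≥0∞}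

lemma enorm_eq_pow_of_coeFn_eq_prod (hp0 : p ≠ 0) (hp : p ≠ ∞) (u : Lp 𝕜 p μ)
    (U : Lp 𝕜 p (Measure.pi fun _ : Fin n => μ))
    (hU : U =ᵐ[Measure.pi fun _ => μ] fun x => ∏ i, u (x i)) :
    ‖U‖ₑ = ‖u‖ₑ ^ n := by
  rw [enorm_def, enorm_def, eLpNorm_congr_ae hU,
    eLpNorm_fin_nat_prod_eq_prod hp0 hp fun _ => Lp.aestronglyMeasurable u, Finset.prod_const,
    Finset.card_univ, Fintype.card_fin]

lemma enorm_sub_le_of_coeFn_eq_prod (hp1 : 1 ≤ p) (hp : p ≠ ∞) (u v : Lp 𝕜 p μ)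
    (U V : Lp 𝕜 p (Measure.pi fun _ : Fin n => μ))
    (hU : U =ᵐ[Measure.pi fun _ => μ] fun x => ∏ i, u (x i))
    (hV : V =ᵐ[Measure.pi fun _ => μ] fun x => ∏ i, v (x i)) :
    ‖U - V‖ₑ ≤ n * ‖u - v‖ₑ * (‖u‖ₑ + ‖v‖ₑ) ^ (n - 1) := by
  have hUV : ⇑(U - V) =ᵐ[Measure.pi fun _ => μ] fun x => ∏ i, u (x i) - ∏ i, v (x i) := by
    filter_upwards [coeFn_sub U V, hU, hV] with x hx hUx hVx
    rw [hx, Pi.sub_apply, hUx, hVx]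
  rw [enorm_def, enorm_def, enorm_def, enorm_def, eLpNorm_congr_ae hUV,
    eLpNorm_congr_ae (coeFn_sub u v)]
  exact eLpNorm_fin_prod_sub_fin_prod_le hp1 hp (Lp.aestronglyMeasurable u)
    (Lp.aestronglyMeasurable v)

end MeasureTheory.Lp

/-- The weight S^{(k,s)} turns the kernel of (|φ⟩⟨φ|)^{⊗k} into the rank-one operator |U⟩⟨U| on
L²(ℝ^k) with U(x) = ∏ᵢ u(xᵢ) and u = (1-Δ)^{s/2}φ, so that ‖u‖_{L²} = ‖φ‖_{H^s}. -/
theorem stmt_11 :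
    ∃ C : ℝ≥0, 0 < C ∧ ∀ (k : ℕ), 1 ≤ k →
      ∀ (u v : Lp ℂ 2 (volume : Measure ℝ))
        (U V : Lp ℂ 2 (volume : Measure (Fin k → ℝ))),
        ((⇑U : (Fin k → ℝ) → ℂ) =ᵐ[volume] fun x => ∏ i : Fin k, (⇑u : ℝ → ℂ) (x i)) →
        ((⇑V : (Fin k → ℝ) → ℂ) =ᵐ[volume] fun x => ∏ i : Fin k, (⇑v : ℝ → ℂ) (x i)) →
        traceNorm (rankOne U U - rankOne V V)
          ≤ (C : ℝ≥0∞) * (k : ℝ≥0∞) * (‖u - v‖₊ : ℝ≥0∞)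
              * ((‖u‖₊ : ℝ≥0∞) + (‖v‖₊ : ℝ≥0∞)) ^ (2 * k - 1) := by
  refine ⟨2, two_pos, fun k hk u v U V hU hV => ?_⟩
  simp only [← enorm_eq_nnnorm]
  set S := ‖u‖ₑ + ‖v‖ₑ
  have hUV := Lp.enorm_sub_le_of_coeFn_eq_prod one_le_two ofNat_ne_top u v U V hU hV
  have hUS : ‖U‖ₑ ≤ S ^ k :=
    (Lp.enorm_eq_pow_of_coeFn_eq_prod two_ne_zero ofNat_ne_top u U hU).trans_le
      (pow_le_pow_left' le_self_add k)
  have hVS : ‖V‖ₑ ≤ S ^ k :=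
    (Lp.enorm_eq_pow_of_coeFn_eq_prod two_ne_zero ofNat_ne_top v V hV).trans_le
      (pow_le_pow_left' le_add_self k)
  calc traceNorm (rankOne U U - rankOne V V)
      ≤ ‖U - V‖ₑ * (‖U‖ₑ + ‖V‖ₑ) := traceNorm_rankOne_sub_rankOne_le U V
    _ ≤ k * ‖u - v‖ₑ * S ^ (k - 1) * (S ^ k + S ^ k) := by gcongr
    _ = 2 * k * ‖u - v‖ₑ * S ^ (2 * k - 1) := by
        rw [show 2 * k - 1 = k - 1 + k by omega, pow_add]
        ring
    _ = _ := by norm_num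

end
end
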